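/- Multinomial telescoping along a rooted tree: if T is a rooted tree with n+1 nodes and for each node v we place the multinomial coefficient C(k_v; k_{v,1},...,k_{v,B_v}) where k_v is the number of descendants of v and k_{v,b} the number of nodes in its b-th branch, then the product of these coefficients over all nodes equals n! divided by the product over non-root nodes v of the subtree size of v. -/
import Mathlib


/-- Finite rooted trees with arbitrarily many ordered branches. -/
inductive RTree where
  | node : List RTree → RTree

mutual
  /-- Number of nodes (the subtree size) of a rooted tree. -/
  def RTree.size : RTree → ℕ
    | .node ts => 1 + RTree.sizeList ts
  /-- Total number of nodes in a list of trees. -/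
  def RTree.sizeList : List RTree → ℕ
    | [] => 0
    | t :: ts => t.size + RTree.sizeList ts
end

mutual
  /-- The product, over all nodes `v` of the tree, of the multinomial
  coefficient `C(k_v; k_{v,1}, …, k_{v,B_v})`, where `k_{v,b}` is the number of
  nodes in the `b`-th branch of `v` and `k_v = ∑_b k_{v,b}` is the number of
  descendants of `v`. -/
  def RTree.multProd : RTree → ℕ
    | .node ts =>
        Nat.multinomial (Finset.range ts.length)
          (fun i => (ts.map RTree.size).getD i 0) * RTree.multList ts
  def RTree.multList : List RTree → ℕ
    | [] => 1
    | t :: ts => t.multProd * RTree.multList ts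
end

mutual
  /-- Product of subtree sizes over all nodes of the tree. -/
  def RTree.subAll : RTree → ℕ
    | .node ts => (1 + RTree.sizeList ts) * RTree.subList ts
  def RTree.subList : List RTree → ℕ
    | [] => 1
    | t :: ts => t.subAll * RTree.subList ts
end

/-- Product of subtree sizes `s(v)` over the non-root nodes `v` of the tree. -/
def RTree.subBelow : RTree → ℕ
  | .node ts => RTree.subList ts

lemma sum_getD_map_size (ts : List RTree) :
    ∑ i ∈ Finset.range ts.length, (ts.map RTree.size).getD i 0 = RTree.sizeList ts := by
  induction ts with
  | nil => simp [RTree.sizeList]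
  | cons t ts ih =>
      rw [RTree.sizeList]
      simp only [List.length_cons, List.map_cons]
      rw [Finset.sum_range_succ']
      simp only [List.getD_cons_succ, List.getD_cons_zero]
      rw [ih]; ring

mutual
theorem rtree_aux : ∀ t : RTree, t.multProd * t.subAll = Nat.factorial t.size
  | .node ts => by
      rw [RTree.multProd, RTree.subAll, RTree.size]
      have h := rtree_list_aux ts
      have hm := Nat.multinomial_spec (Finset.range ts.length)
        (fun i => (ts.map RTree.size).getD i 0)
      calc Nat.multinomial (Finset.range ts.length)
            (fun i => (ts.map RTree.size).getD i 0) * RTree.multList ts *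
            ((1 + RTree.sizeList ts) * RTree.subList ts)
          = (1 + RTree.sizeList ts) * (Nat.multinomial (Finset.range ts.length)
              (fun i => (ts.map RTree.size).getD i 0) *
              (RTree.multList ts * RTree.subList ts)) := by ring
        _ = (1 + RTree.sizeList ts) * Nat.factorial (RTree.sizeList ts) := by
              rw [h, Nat.mul_comm (Nat.multinomial _ _), hm, sum_getD_map_size]
        _ = Nat.factorial (1 + RTree.sizeList ts) := by
              rw [Nat.add_comm 1, Nat.factorial_succ, Nat.add_comm _ 1]

theorem rtree_list_aux : ∀ ts : List RTree,
    RTree.multList ts * RTree.subList ts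
      = ∏ i ∈ Finset.range ts.length, Nat.factorial ((ts.map RTree.size).getD i 0)
  | [] => by simp [RTree.multList, RTree.subList]
  | t :: ts => by
      rw [RTree.multList, RTree.subList]
      simp only [List.length_cons, List.map_cons]
      rw [Finset.prod_range_succ']
      simp only [List.getD_cons_succ, List.getD_cons_zero]
      rw [← rtree_list_aux ts]
      have := rtree_aux t
      calc t.multProd * RTree.multList ts * (t.subAll * RTree.subList ts)
          = (t.multProd * t.subAll) * (RTree.multList ts * RTree.subList ts) := by ring
        _ = _ := by rw [this]; ring
end

/-- Multinomial telescoping along a rooted tree with `n + 1` nodes: the product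
over all nodes of the multinomial coefficients of branch sizes equals
`n! / ∏_{v ≠ root} s(v)`, where `s(v)` is the subtree size of `v`
(the hook length formula for rooted trees). -/
theorem rtree_multinomial_telescope (t : RTree) :
    t.multProd * t.subBelow = Nat.factorial (t.size - 1) := by
  obtain ⟨ts⟩ := t
  rw [RTree.subBelow, RTree.size, Nat.add_sub_cancel_left]
  have h := rtree_aux (.node ts)
  rw [RTree.subAll, RTree.size] at h
  have hfac : Nat.factorial (1 + RTree.sizeList ts)
      = (1 + RTree.sizeList ts) * Nat.factorial (RTree.sizeList ts) := by
    rw [Nat.add_comm, Nat.factorial_succ, Nat.add_comm]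
  have hpos : 0 < 1 + RTree.sizeList ts := Nat.add_pos_left Nat.one_pos _
  apply Nat.eq_of_mul_eq_mul_left hpos
  rw [← hfac, ← h]; ring
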